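/- Assume the ensemble setup and fix s ≥ 0. If σ̂_n^{2s} = o(n^{1/2}) as n → ∞ (i.e. σ̂_n^{2s}/√n → 0), then the odd expected spectral moments vanish asymptotically: m̄_{2s+1}^{(n)} → 0 as n → ∞. -/

import Mathlib

open MeasureTheory ProbabilityTheory Filter

/-- The random matrix `A_n` with entries `a i j / √n` (indices in `{1,…,n}`). -/
noncomputable def matA {Ω : Type} (a : ℕ → ℕ → Ω → ℝ) (n : ℕ) (ω : Ω) :
    Matrix (Fin n) (Fin n) ℝ :=
  Matrix.of fun u v => a (u.1 + 1) (v.1 + 1) ω / Real.sqrt n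

/-- The `k`-th spectral moment `m_k^{(n)} = (1/n)·trace(A_n^k)`. -/
noncomputable def specMom {Ω : Type} (a : ℕ → ℕ → Ω → ℝ) (n k : ℕ) (ω : Ω) : ℝ :=
  (1 / (n : ℝ)) * Matrix.trace ((matA a n ω) ^ k)

/-- The `k`-th expected spectral moment `m̄_k^{(n)} = E[m_k^{(n)}]`. -/
noncomputable def expSpecMom {Ω : Type} [MeasurableSpace Ω] (P : Measure Ω)
    (a : ℕ → ℕ → Ω → ℝ) (n k : ℕ) : ℝ :=
  ∫ ω, specMom a n k ω ∂P

/-- `σ̂_n = max_{1 ≤ i ≤ n} σ i`. -/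
noncomputable def sigHat (σ : ℕ → ℝ) (n : ℕ) : ℝ := sSup (σ '' Set.Icc 1 n)

/-!
Expanding the trace, `m̄_{2s+1}^{(n)}` is `n^{-1} n^{-(2s+1)/2}` times a sum over closed walks
`x` of length `2s+1` on `{1,…,n}` of `E[∏_l a(x_l, x_{l+1})]`. By independence this expectation
factors over the distinct edges of the walk, so it vanishes as soon as some edge is traversed
exactly once. Otherwise the walk has at most `s` distinct edges, hence at most `s+1` distinct
vertices; there are at most `(s+1)^{2s+1} n^{s+1}` such walks, each contributing at most
`K^{2s+1}`, so `|m̄_{2s+1}^{(n)}| ≤ ((s+1)K)^{2s+1} / √n`.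
-/

open Finset

theorem Matrix.trace_mul_pow_eq_sum {ι R : Type*} [Fintype ι] [DecidableEq ι] [CommSemiring R]
    (A B : Matrix ι ι R) (m : ℕ) :
    (B * A ^ m).trace = ∑ x : Fin (m + 1) → ι,
      B (x (Fin.last m)) (x 0) * ∏ l : Fin m, A (x l.castSucc) (x l.succ) := by
  induction m generalizing B with
  | zero =>
    simp only [pow_zero, mul_one, Matrix.trace, Matrix.diag_apply, univ_eq_empty, prod_empty]
    exact ((Equiv.funUnique (Fin 1) ι).sum_comp fun i => B i i).symm
  | succ m ih =>
    rw [pow_succ', ← mul_assoc, ih, ← (Fin.consEquiv fun _ => ι).sum_comp (fun x => B _ _ * _),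
      Fintype.sum_prod_type, Finset.sum_comm]
    refine Fintype.sum_congr _ _ fun x => ?_
    simp only [Matrix.mul_apply, Finset.sum_mul, Fin.consEquiv_apply, Fin.prod_univ_succ]
    refine Fintype.sum_congr _ _ fun v => ?_
    simp only [← Fin.succ_last, Fin.cons_succ, Fin.cons_zero, Fin.castSucc_zero,
      Fin.succ_zero_eq_one, Fin.cons_one, Fin.castSucc_succ]
    ring

theorem Matrix.trace_pow_succ_eq_sum {ι R : Type*} [Fintype ι] [DecidableEq ι] [CommSemiring R]
    (A : Matrix ι ι R) (m : ℕ) :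
    (A ^ (m + 1)).trace = ∑ x : Fin (m + 1) → ι, ∏ l, A (x l) (x (l + 1)) := by
  rw [pow_succ', Matrix.trace_mul_pow_eq_sum]
  refine Fintype.sum_congr _ _ fun x => ?_
  rw [Fin.prod_univ_castSucc, Fin.last_add_one, mul_comm]
  simp [Fin.coeSucc_eq_succ]

section Walks

variable {V : Type*} [DecidableEq V]

theorem card_image_range_succ_le_card_edges_add_one (x : ℕ → V) (t : ℕ) :
    #((range (t + 1)).image x) ≤ #((range t).image fun l => s(x l, x (l + 1))) + 1 := by
  set e : ℕ → Sym2 V := fun l => s(x l, x (l + 1))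
  induction t with
  | zero => simp
  | succ t ih =>
    have hV : (range (t + 2)).image x = insert (x (t + 1)) ((range (t + 1)).image x) := by
      rw [range_add_one, image_insert]
    have hE : (range (t + 1)).image e = insert (e t) ((range t).image e) := by
      rw [range_add_one, image_insert]
    rw [hV, hE]
    by_cases hold : x (t + 1) ∈ (range (t + 1)).image x
    · rw [insert_eq_of_mem hold]
      exact ih.trans (Nat.add_le_add_right (card_le_card (subset_insert _ _)) 1)
    · have hnew : e t ∉ (range t).image e := by
        simp only [e, mem_image, mem_range, Sym2.eq_iff, not_exists, not_and] at hold ⊢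
        rintro l hl (⟨-, h⟩ | ⟨h, -⟩)
        · exact hold (l + 1) (by omega) h
        · exact hold l (by omega) h
      rw [card_insert_of_notMem hold, card_insert_of_notMem hnew]
      omega

open Fin.NatCast in
theorem card_image_le_card_closedWalk_edges_add_one {m : ℕ} (x : Fin (m + 1) → V) :
    #(univ.image x) ≤ #(univ.image fun l => s(x l, x (l + 1))) + 1 := by
  have hverts : (range (m + 1)).image (fun l : ℕ => x (l : Fin (m + 1))) = univ.image x := by
    ext v
    simp only [mem_image, mem_range, mem_univ, true_and]
    exact ⟨fun ⟨l, _, h⟩ => ⟨(l : Fin (m + 1)), h⟩,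
      fun ⟨l, h⟩ => ⟨l.val, l.2, by rwa [Fin.cast_val_eq_self]⟩⟩
  have hedges : (range m).image (fun l : ℕ => s(x (l : Fin (m + 1)), x ((l + 1 : ℕ) : Fin (m + 1))))
      ⊆ univ.image fun l => s(x l, x (l + 1)) := by
    intro e
    simp only [mem_image, mem_range, mem_univ, true_and]
    exact fun ⟨l, _, h⟩ => ⟨(l : Fin (m + 1)), by rwa [← Nat.cast_succ]⟩
  rw [← hverts]
  exact (card_image_range_succ_le_card_edges_add_one (fun l : ℕ => x (l : Fin (m + 1))) m).trans
    (Nat.add_le_add_right (card_le_card hedges) 1)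

theorem exists_card_fiber_eq_one_of_card_lt_two_mul {κ ι : Type*} [Fintype κ] [DecidableEq ι]
    (w : κ → ι) (h : Fintype.card κ < 2 * #(univ.image w)) : ∃ i, #{l | w l = i} = 1 := by
  by_contra! hne
  have hfiber : ∀ i ∈ univ.image w, 2 ≤ #{l | w l = i} := by
    intro i hi
    have hpos : 0 < #{l | w l = i} := card_pos.2 <| by
      obtain ⟨l, -, rfl⟩ := mem_image.1 hi
      exact ⟨l, by simp⟩
    have hne_i := hne i
    omega
  have hsum := card_eq_sum_card_image w univ
  have hle := card_nsmul_le_sum _ _ 2 hfiber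
  rw [card_univ] at hsum
  rw [smul_eq_mul] at hle
  omega

theorem card_filter_card_image_le {κ : Type*} [Fintype κ] [DecidableEq κ] [Fintype V]
    [Nonempty V] (t : ℕ) :
    #{x : κ → V | #(univ.image x) ≤ t} ≤ t ^ Fintype.card κ * Fintype.card V ^ t := by
  calc #{x : κ → V | #(univ.image x) ≤ t}
      ≤ #(univ : Finset ((κ → Fin t) × (Fin t → V))) := by
        -- `x` factors through `Fin t`, by embedding its image into `Fin t`
        refine card_le_card_of_surjOn (fun p => p.2 ∘ p.1) fun x hx => ?_
        set L := univ.image x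
        have hL : #L ≤ t := (mem_filter.1 hx).2
        let e : L ↪ Fin t := L.equivFin.toEmbedding.trans (Fin.castLEEmb hL)
        have hxL : ∀ l, x l ∈ L := fun l => mem_image_of_mem x (mem_univ l)
        refine ⟨(fun l => e ⟨x l, hxL l⟩,
          Function.extend e Subtype.val fun _ => Classical.arbitrary V), mem_coe.2 (mem_univ _), ?_⟩
        funext l
        simp only [Function.comp_apply]
        exact e.injective.extend_apply Subtype.val _ ⟨x l, hxL l⟩
    _ = t ^ Fintype.card κ * Fintype.card V ^ t := by simp [Fintype.card_prod]

end Walks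

theorem ProbabilityTheory.iIndepFun.integral_prod_comp_eq_zero {Ω ι κ : Type*}
    [MeasurableSpace Ω] {P : Measure Ω} [Fintype κ] [DecidableEq ι] {f : ι → Ω → ℝ}
    (hind : iIndepFun f P) (hf : ∀ i, Measurable (f i)) (w : κ → ι) {i : ι}
    (hi : #{l | w l = i} = 1) (hmean : ∫ ω, f i ω ∂P = 0) :
    ∫ ω, ∏ l, f (w l) ω ∂P = 0 := by
  let mult (j : ι) : ℕ := #{l | w l = j}
  have hprod (ω : Ω) : ∏ l, f (w l) ω = ∏ j : univ.image w, f j ω ^ mult j := by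
    rw [prod_coe_sort (univ.image w) fun j => f j ω ^ mult j]
    exact prod_comp (fun j => f j ω) w
  have hindPow : iIndepFun (fun (j : univ.image w) ω => f j ω ^ mult j) P :=
    (hind.comp (fun j x => x ^ mult j) fun j => measurable_id.pow_const _).precomp
      Subtype.val_injective
  have hmem : i ∈ univ.image w := by
    obtain ⟨l, hl⟩ := card_pos.1 (hi ▸ Nat.one_pos : 0 < #{l | w l = i})
    exact mem_image.2 ⟨l, mem_univ l, (mem_filter.1 hl).2⟩
  calc ∫ ω, ∏ l, f (w l) ω ∂P = ∫ ω, ∏ j : univ.image w, f j ω ^ mult j ∂P := by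
        simp_rw [hprod]
    _ = ∏ j : univ.image w, ∫ ω, f j ω ^ mult j ∂P :=
        hindPow.integral_fun_prod_eq_prod_integral fun j =>
          ((hf j).pow_const _).aestronglyMeasurable
    _ = 0 := prod_eq_zero (mem_univ ⟨i, hmem⟩) (by simpa [mult, hi] using hmean)

/-- The matrix indices `Fin n` are `0`-based while the entries `a i j` are `1`-based; the edge
`{u, v}` goes to the index `(min, max)` of the independent family of upper-triangular entries. -/
def edgeIndex (n : ℕ) : Sym2 (Fin n) → {q : ℕ × ℕ // 1 ≤ q.1 ∧ q.1 ≤ q.2} :=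
  Sym2.lift ⟨fun u v => ⟨(min (u.1 + 1) (v.1 + 1), max (u.1 + 1) (v.1 + 1)), by omega⟩,
    fun u v => by simp only [min_comm, max_comm]⟩

theorem edgeIndex_injective (n : ℕ) : Function.Injective (edgeIndex n) := by
  refine fun e e' => Sym2.inductionOn₂ e e' fun u v u' v' h => ?_
  simp only [edgeIndex, Sym2.lift_mk, Subtype.mk.injEq, Prod.mk.injEq] at h
  rw [Sym2.eq_iff, Fin.ext_iff, Fin.ext_iff, Fin.ext_iff, Fin.ext_iff]
  omega

theorem apply_edgeIndex {Ω : Type} {a : ℕ → ℕ → Ω → ℝ} (hsymm : ∀ i j, a i j = a j i) {n : ℕ}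
    (u v : Fin n) :
    a (edgeIndex n s(u, v)).1.1 (edgeIndex n s(u, v)).1.2 = a (u.1 + 1) (v.1 + 1) := by
  simp only [edgeIndex, Sym2.lift_mk]
  rcases le_total u.1 v.1 with h | h
  · rw [min_eq_left (by omega), max_eq_right (by omega)]
  · rw [min_eq_right (by omega), max_eq_left (by omega), hsymm]

def walkWeight {Ω : Type} (a : ℕ → ℕ → Ω → ℝ) {n m : ℕ} (x : Fin (m + 1) → Fin n) (ω : Ω) :
    ℝ :=
  ∏ l, a ((x l).1 + 1) ((x (l + 1)).1 + 1) ω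

theorem specMom_succ_eq_sum_walkWeight {Ω : Type} (a : ℕ → ℕ → Ω → ℝ) (n m : ℕ) (ω : Ω) :
    specMom a n (m + 1) ω =
      (n * √n ^ (m + 1))⁻¹ * ∑ x : Fin (m + 1) → Fin n, walkWeight a x ω := by
  rw [specMom, Matrix.trace_pow_succ_eq_sum, Finset.mul_sum, Finset.mul_sum]
  refine Fintype.sum_congr _ _ fun x => ?_
  simp only [matA, Matrix.of_apply, walkWeight, prod_div_distrib, prod_const, card_univ,
    Fintype.card_fin]
  ring

section Ensemble

variable {Ω : Type} [MeasurableSpace Ω] {P : Measure Ω} {K : ℝ}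
  {a : ℕ → ℕ → Ω → ℝ} {n m : ℕ}

theorem ae_abs_walkWeight_le (hbdd : ∀ i j, 1 ≤ i → 1 ≤ j → ∀ᵐ ω ∂P, |a i j ω| < K)
    (x : Fin (m + 1) → Fin n) : ∀ᵐ ω ∂P, |walkWeight a x ω| ≤ K ^ (m + 1) := by
  have hall : ∀ᵐ ω ∂P, ∀ l, |a ((x l).1 + 1) ((x (l + 1)).1 + 1) ω| < K :=
    ae_all_iff.2 fun l => hbdd _ _ (by omega) (by omega)
  filter_upwards [hall] with ω hω
  calc |walkWeight a x ω| = ∏ l, |a ((x l).1 + 1) ((x (l + 1)).1 + 1) ω| := abs_prod _ _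
    _ ≤ ∏ _l : Fin (m + 1), K := prod_le_prod (fun _ _ => abs_nonneg _) fun l _ => (hω l).le
    _ = K ^ (m + 1) := by simp

theorem integrable_walkWeight [IsProbabilityMeasure P] (hmeas : ∀ i j, Measurable (a i j))
    (hbdd : ∀ i j, 1 ≤ i → 1 ≤ j → ∀ᵐ ω ∂P, |a i j ω| < K) (x : Fin (m + 1) → Fin n) :
    Integrable (walkWeight a x) P :=
  .of_bound (Finset.measurable_prod _ fun _ _ => hmeas _ _).aestronglyMeasurable _
    (ae_abs_walkWeight_le hbdd x)

theorem abs_integral_walkWeight_le [IsProbabilityMeasure P]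
    (hbdd : ∀ i j, 1 ≤ i → 1 ≤ j → ∀ᵐ ω ∂P, |a i j ω| < K) (x : Fin (m + 1) → Fin n) :
    |∫ ω, walkWeight a x ω ∂P| ≤ K ^ (m + 1) := by
  simpa using norm_integral_le_of_norm_le_const (μ := P) (f := walkWeight a x)
    (by simpa only [Real.norm_eq_abs] using ae_abs_walkWeight_le hbdd x)

theorem expSpecMom_succ_eq_sum_integral_walkWeight [IsProbabilityMeasure P]
    (hmeas : ∀ i j, Measurable (a i j))
    (hbdd : ∀ i j, 1 ≤ i → 1 ≤ j → ∀ᵐ ω ∂P, |a i j ω| < K) :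
    expSpecMom P a n (m + 1) =
      (n * √n ^ (m + 1))⁻¹ * ∑ x : Fin (m + 1) → Fin n, ∫ ω, walkWeight a x ω ∂P := by
  simp_rw [expSpecMom, specMom_succ_eq_sum_walkWeight a n m]
  rw [integral_const_mul, integral_finsetSum _ fun x _ => integrable_walkWeight hmeas hbdd x]

theorem integral_walkWeight_eq_zero (hmeas : ∀ i j, Measurable (a i j))
    (hsymm : ∀ i j, a i j = a j i)
    (hindep : iIndepFun
      (fun q : {q : ℕ × ℕ // 1 ≤ q.1 ∧ q.1 ≤ q.2} => a q.1.1 q.1.2) P)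
    (hmean : ∀ i j, 1 ≤ i → 1 ≤ j → ∫ ω, a i j ω ∂P = 0) {s : ℕ}
    (x : Fin (2 * s + 1) → Fin n) (hx : s + 1 < #(univ.image x)) :
    ∫ ω, walkWeight a x ω ∂P = 0 := by
  let w (l : Fin (2 * s + 1)) := edgeIndex n s(x l, x (l + 1))
  have hedges : #(univ.image w) = #(univ.image fun l => s(x l, x (l + 1))) := by
    rw [← card_image_of_injective _ (edgeIndex_injective n), image_image]
    rfl
  have hcard : Fintype.card (Fin (2 * s + 1)) < 2 * #(univ.image w) := by
    have := card_image_le_card_closedWalk_edges_add_one x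
    rw [Fintype.card_fin]
    omega
  obtain ⟨q, hq⟩ := exists_card_fiber_eq_one_of_card_lt_two_mul w hcard
  have hweight (ω : Ω) : walkWeight a x ω = ∏ l, a (w l).1.1 (w l).1.2 ω := by
    simp only [walkWeight, w, apply_edgeIndex hsymm]
  simp_rw [hweight]
  exact hindep.integral_prod_comp_eq_zero (fun q => hmeas _ _) w hq
    (hmean _ _ q.2.1 (q.2.1.trans q.2.2))

theorem abs_expSpecMom_odd_le [IsProbabilityMeasure P] (hK : 0 ≤ K)
    (hmeas : ∀ i j, Measurable (a i j)) (hsymm : ∀ i j, a i j = a j i)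
    (hindep : iIndepFun
      (fun q : {q : ℕ × ℕ // 1 ≤ q.1 ∧ q.1 ≤ q.2} => a q.1.1 q.1.2) P)
    (hmean : ∀ i j, 1 ≤ i → 1 ≤ j → ∫ ω, a i j ω ∂P = 0)
    (hbdd : ∀ i j, 1 ≤ i → 1 ≤ j → ∀ᵐ ω ∂P, |a i j ω| < K) (s : ℕ) (hn : 0 < n) :
    |expSpecMom P a n (2 * s + 1)| ≤ ((s + 1) * K) ^ (2 * s + 1) / √n := by
  have : NeZero n := ⟨hn.ne'⟩
  set I : (Fin (2 * s + 1) → Fin n) → ℝ := fun x => ∫ ω, walkWeight a x ω ∂P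
  set G : Finset (Fin (2 * s + 1) → Fin n) := {x | #(univ.image x) ≤ s + 1}
  have hG : (#G : ℝ) ≤ (s + 1) ^ (2 * s + 1) * n ^ (s + 1) := by
    exact_mod_cast (card_filter_card_image_le (κ := Fin (2 * s + 1)) (V := Fin n) (s + 1)).trans
      (by simp [mul_comm])
  have hsum : |∑ x, I x| ≤ #G * K ^ (2 * s + 1) := by
    rw [← sum_filter_of_ne fun x _ hx => not_lt.1 fun h =>
      hx (integral_walkWeight_eq_zero hmeas hsymm hindep hmean x h)]
    exact (abs_sum_le_sum_abs _ _).trans <|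
      (sum_le_card_nsmul _ _ _ fun x _ => abs_integral_walkWeight_le hbdd x).trans_eq
        (nsmul_eq_mul _ _)
  have hsqrt : √n ^ (2 * s + 1) = n ^ s * √n := by
    rw [pow_succ, pow_mul, Real.sq_sqrt n.cast_nonneg]
  rw [expSpecMom_succ_eq_sum_integral_walkWeight hmeas hbdd, abs_mul, abs_of_pos (by positivity)]
  calc (n * √n ^ (2 * s + 1))⁻¹ * |∑ x, I x|
      ≤ (n * √n ^ (2 * s + 1))⁻¹ * ((s + 1) ^ (2 * s + 1) * n ^ (s + 1) * K ^ (2 * s + 1)) := by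
        gcongr
        exact hsum.trans (by gcongr)
    _ = ((s + 1) * K) ^ (2 * s + 1) / √n := by
        rw [hsqrt, mul_pow]
        field_simp
        ring

end Ensemble

theorem odd_moments_vanish_general {Ω : Type} [MeasurableSpace Ω]
    (P : Measure Ω) [IsProbabilityMeasure P]
    (K : ℝ) (hK : 0 < K)
    (a : ℕ → ℕ → Ω → ℝ)
    (hmeas : ∀ i j, Measurable (a i j))
    (hsymm : ∀ i j, a i j = a j i)
    (hindep : iIndepFun
      (fun q : {q : ℕ × ℕ // 1 ≤ q.1 ∧ q.1 ≤ q.2} => a q.1.1 q.1.2) P)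
    (hmean : ∀ i j, 1 ≤ i → 1 ≤ j → ∫ ω, a i j ω ∂P = 0)
    (hbdd : ∀ i j, 1 ≤ i → 1 ≤ j → ∀ᵐ ω ∂P, |a i j ω| < K)
    (s : ℕ) :
    Tendsto (fun n : ℕ => expSpecMom P a n (2 * s + 1)) atTop (nhds 0) := by
  have hbound : Tendsto (fun n : ℕ => ((s + 1) * K) ^ (2 * s + 1) / √n) atTop (nhds 0) :=
    (Real.tendsto_sqrt_atTop.comp tendsto_natCast_atTop_atTop).const_div_atTop _
  refine squeeze_zero_norm' ?_ hbound
  filter_upwards [eventually_gt_atTop 0] with n hn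
  exact abs_expSpecMom_odd_le hK.le hmeas hsymm hindep hmean hbdd s hn

/-- **Zero odd moments**: if `σ̂_n^{2s} = o(√n)`, then `m̄_{2s+1}^{(n)} → 0`. -/
theorem odd_moments_vanish {Ω : Type} [MeasurableSpace Ω]
    (P : Measure Ω) [IsProbabilityMeasure P]
    (K : ℝ) (hK : 0 < K)
    (σ : ℕ → ℝ) (hσpos : ∀ i, 1 ≤ i → 0 < σ i)
    (a : ℕ → ℕ → Ω → ℝ)
    (hmeas : ∀ i j, Measurable (a i j))
    (hsymm : ∀ i j, a i j = a j i)
    (hindep : iIndepFun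
      (fun q : {q : ℕ × ℕ // 1 ≤ q.1 ∧ q.1 ≤ q.2} => a q.1.1 q.1.2) P)
    (hmean : ∀ i j, 1 ≤ i → 1 ≤ j → ∫ ω, a i j ω ∂P = 0)
    (hvar : ∀ i j, 1 ≤ i → 1 ≤ j → ∫ ω, (a i j ω) ^ 2 ∂P = σ i * σ j)
    (hbdd : ∀ i j, 1 ≤ i → 1 ≤ j → ∀ᵐ ω ∂P, |a i j ω| < K)
    (s : ℕ)
    (hsmall : Tendsto (fun n : ℕ => sigHat σ n ^ (2 * s) / Real.sqrt n) atTop (nhds 0)) :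
    Tendsto (fun n : ℕ => expSpecMom P a n (2 * s + 1)) atTop (nhds 0) :=
  odd_moments_vanish_general P K hK a hmeas hsymm hindep hmean hbdd s
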